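/- A causal-net is connected if and only if it can be transformed into a point by a finite (possibly empty) sequence of simple contractions, i.e. there exist causal-nets G = G₀, G₁, …, Gₙ with Gₙ a point and simple contractions λᵢ : G_{i-1} → Gᵢ for 1 ≤ i ≤ n. -/

import Mathlib

open CategoryTheory

namespace CausalNets

/-- Acyclicity condition for raw directed-multigraph data: every directed cycle
has length zero. -/
def NoCycleData (V E : Type) (s t : E → V) : Prop :=
  letI : Quiver V := ⟨fun a b => { e : E // s e = a ∧ t e = b }⟩
  ∀ (v : V) (p : Quiver.Path v v), p.length = 0

/-- A causal-net: a finite acyclic directed multigraph (isolated vertices and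
parallel edges allowed). -/
structure CausalNet where
  V : Type
  E : Type
  src : E → V
  tgt : E → V
  fintypeV : Fintype V
  fintypeE : Fintype E
  acyclic : NoCycleData V E src tgt

attribute [instance] CausalNet.fintypeV CausalNet.fintypeE

instance CausalNet.quiver (G : CausalNet) : Quiver G.V :=
  ⟨fun a b => { e : G.E // G.src e = a ∧ G.tgt e = b }⟩

/-- The category `Cau` of causal-nets: a morphism `G ⟶ H` is a functor between
the path categories `Paths G.V ⥤ Paths H.V`. -/
instance : Category CausalNet where
  Hom G H := Paths G.V ⥤ Paths H.V
  id G := 𝟭 (Paths G.V)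
  comp φ ψ := φ ⋙ ψ

variable {G H K : CausalNet}

/-- The action of a morphism of causal-nets on vertices (objects). -/
def vmap (φ : G ⟶ H) : G.V → H.V := (φ : Paths G.V ⥤ Paths H.V).obj

/-- The action of a morphism of causal-nets on directed paths (morphisms). -/
def pmap (φ : G ⟶ H) {a b : G.V} (p : Quiver.Path a b) :
    Quiver.Path (vmap φ a) (vmap φ b) :=
  (φ : Paths G.V ⥤ Paths H.V).map p

/-- The quiver arrow corresponding to an edge. -/
def edgeHom (G : CausalNet) (e : G.E) : G.src e ⟶ G.tgt e := ⟨e, rfl, rfl⟩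

/-- The directed path which is the image of the edge `e` under the morphism `φ`. -/
def edgePath (φ : G ⟶ H) (e : G.E) :
    Quiver.Path (vmap φ (G.src e)) (vmap φ (G.tgt e)) :=
  pmap φ (Quiver.Hom.toPath (edgeHom G e))

/-- The underlying edge of a quiver arrow. -/
def homEdge {a b : G.V} (f : a ⟶ b) : G.E := Subtype.val f

/-- The list of edges traversed by a directed path. -/
def pathEdges : {a b : G.V} → Quiver.Path a b → List G.E
  | _, _, Quiver.Path.nil => []
  | _, _, Quiver.Path.cons p f => pathEdges p ++ [homEdge f]

/-- The list of vertices visited by a directed path (including endpoints). -/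
def pathVertices : {a b : G.V} → Quiver.Path a b → List G.V
  | a, _, Quiver.Path.nil => [a]
  | _, b, Quiver.Path.cons p _ => pathVertices p ++ [b]

/-- An edge `e` is a contraction of `φ` if `φ(e)` has length `0`. -/
def IsContractionEdge (φ : G ⟶ H) (e : G.E) : Prop := (edgePath φ e).length = 0

/-- An edge `e` is a segment of `φ` if `φ(e)` has length `1`. -/
def IsSegmentEdge (φ : G ⟶ H) (e : G.E) : Prop := (edgePath φ e).length = 1

/-- An edge `e` is a subdivision of `φ` if `φ(e)` has length at least `2`. -/
def IsSubdivisionEdge (φ : G ⟶ H) (e : G.E) : Prop := 2 ≤ (edgePath φ e).length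

/-- `φ` maps the edge `e` to the length-one path consisting of the edge `h`. -/
def MapsToEdge (φ : G ⟶ H) (e : G.E) (h : H.E) : Prop :=
  pathEdges (edgePath φ e) = [h]

/-- A quotient: a morphism with no null-vertex and no null-edge. -/
def IsQuotientMor (φ : G ⟶ H) : Prop :=
  (∀ v : H.V, ∃ w : G.V, vmap φ w = v) ∧ ∀ h : H.E, ∃ e : G.E, MapsToEdge φ e h

/-- A coarse-graining: a quotient with no subdivision. -/
def IsCoarseGraining (φ : G ⟶ H) : Prop :=
  IsQuotientMor φ ∧ ∀ e : G.E, ¬ IsSubdivisionEdge φ e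

/-- A vertex-coarse-graining: a coarse-graining with no multiple-edge. -/
def IsVertexCoarseGraining (φ : G ⟶ H) : Prop :=
  IsCoarseGraining φ ∧
  ∀ (h : H.E) (e₁ e₂ : G.E), MapsToEdge φ e₁ h → MapsToEdge φ e₂ h → e₁ = e₂

/-- An edge-coarse-graining: a coarse-graining with no multiple-vertex and no
contraction. -/
def IsEdgeCoarseGraining (φ : G ⟶ H) : Prop :=
  IsCoarseGraining φ ∧ Function.Injective (vmap φ) ∧ ∀ e : G.E, ¬ IsContractionEdge φ e

/-- A merging: a vertex-coarse-graining with no contraction. -/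
def IsMerging (φ : G ⟶ H) : Prop :=
  IsVertexCoarseGraining φ ∧ ∀ e : G.E, ¬ IsContractionEdge φ e

/-- A fusion: a coarse-graining with no contraction. -/
def IsFusion (φ : G ⟶ H) : Prop :=
  IsCoarseGraining φ ∧ ∀ e : G.E, ¬ IsContractionEdge φ e

/-- An inclusion: a morphism injective on vertices and on directed paths
(an injective-on-objects faithful functor). -/
def IsInclusion (φ : G ⟶ H) : Prop :=
  Function.Injective (vmap φ) ∧
  ∀ (a b : G.V) (p q : Quiver.Path a b), pmap φ p = pmap φ q → p = q

/-- An embedding: an inclusion with no subdivision. -/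
def IsEmbedding (φ : G ⟶ H) : Prop :=
  IsInclusion φ ∧ ∀ e : G.E, ¬ IsSubdivisionEdge φ e

/-- An immersion: an inclusion such that images of distinct subdivision edges
share no edge. -/
def IsImmersion (φ : G ⟶ H) : Prop :=
  IsInclusion φ ∧
  ∀ e₁ e₂ : G.E, e₁ ≠ e₂ → IsSubdivisionEdge φ e₁ → IsSubdivisionEdge φ e₂ →
    ∀ h : H.E, h ∈ pathEdges (edgePath φ e₁) → h ∉ pathEdges (edgePath φ e₂)

/-- The internal vertices of a directed path (all visited vertices except the
two endpoints). -/
def internalVertices {a b : G.V} (p : Quiver.Path a b) : List G.V :=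
  ((pathVertices p).dropLast).tail

/-- A strong morphism: all internal vertices of images of subdivision edges are
null-vertices. -/
def IsStrong (φ : G ⟶ H) : Prop :=
  ∀ e : G.E, IsSubdivisionEdge φ e →
    ∀ v ∈ internalVertices (edgePath φ e), ∀ w : G.V, vmap φ w ≠ v

/-- A vertex-disjoint morphism: images of distinct subdivision edges share no
internal vertex. -/
def IsVertexDisjoint (φ : G ⟶ H) : Prop :=
  ∀ e₁ e₂ : G.E, e₁ ≠ e₂ → IsSubdivisionEdge φ e₁ → IsSubdivisionEdge φ e₂ →
    ∀ v : H.V, v ∈ internalVertices (edgePath φ e₁) → v ∉ internalVertices (edgePath φ e₂)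

/-- A topological embedding: a strong vertex-disjoint inclusion. -/
def IsTopologicalEmbedding (φ : G ⟶ H) : Prop :=
  IsInclusion φ ∧ IsStrong φ ∧ IsVertexDisjoint φ

/-- The edge `e` covers the vertex `v` if `v` occurs on the path `φ(e)`. -/
def Covers (φ : G ⟶ H) (e : G.E) (v : H.V) : Prop :=
  v ∈ pathVertices (edgePath φ e)

/-- An isolated vertex: a vertex incident to no edge. -/
def IsolatedVertex (G : CausalNet) (v : G.V) : Prop :=
  ∀ e : G.E, G.src e ≠ v ∧ G.tgt e ≠ v

/-- A subdivision morphism: a topological embedding such that every non-isolated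
vertex of the codomain is covered and every isolated vertex of the codomain is a
simple-vertex. -/
def IsSubdivisionMor (φ : G ⟶ H) : Prop :=
  IsTopologicalEmbedding φ ∧
  (∀ v : H.V, ¬ IsolatedVertex H v → ∃ e : G.E, Covers φ e v) ∧
  (∀ v : H.V, IsolatedVertex H v → ∃! w : G.V, vmap φ w = v)

theorem mapPath_length {V W : Type} [Quiver V] [Quiver W] (F : V ⥤q W) :
    ∀ {a b : V} (p : Quiver.Path a b), (F.mapPath p).length = p.length := by
  intro a b p
  induction p with
  | nil => rfl
  | cons q f ih =>
      show ((F.mapPath q).cons (F.map f)).length = (q.cons f).length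
      rw [Quiver.Path.length_cons, Quiver.Path.length_cons, ih]

theorem noCycleData_of_map {V₁ E₁ : Type} (s₁ t₁ : E₁ → V₁) (G : CausalNet)
    (f : V₁ → G.V) (g : E₁ → G.E)
    (hs : ∀ e, G.src (g e) = f (s₁ e)) (ht : ∀ e, G.tgt (g e) = f (t₁ e)) :
    NoCycleData V₁ E₁ s₁ t₁ := by
  letI : Quiver V₁ := ⟨fun a b => { e : E₁ // s₁ e = a ∧ t₁ e = b }⟩
  intro v p
  let F : V₁ ⥤q G.V :=
    { obj := f
      map := fun {a b} e =>
        ⟨g (Subtype.val e), by rw [hs, (Subtype.prop e).1], by rw [ht, (Subtype.prop e).2]⟩ }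
  have h := G.acyclic (f v) (F.mapPath p)
  rw [mapPath_length] at h
  exact h

theorem noCycleData_of_lt {V E : Type} [Preorder V] (s t : E → V)
    (hlt : ∀ e, s e < t e) : NoCycleData V E s t := by
  letI : Quiver V := ⟨fun a b => { e : E // s e = a ∧ t e = b }⟩
  have key : ∀ {a b : V} (p : Quiver.Path a b), (a = b ∧ p.length = 0) ∨ a < b := by
    intro a b p
    induction p with
    | nil => exact Or.inl ⟨rfl, rfl⟩
    | cons q f ih =>
        have hcb := hlt (Subtype.val f)
        rw [(Subtype.prop f).1, (Subtype.prop f).2] at hcb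
        rcases ih with ⟨h, _⟩ | h
        · exact Or.inr (by rw [h]; exact hcb)
        · exact Or.inr (lt_trans h hcb)
  intro v p
  rcases key p with ⟨_, h⟩ | h
  · exact h
  · exact absurd h (lt_irrefl v)

/-- The sub-causal-net spanned by a set of vertices and a set of edges. -/
noncomputable def mkSub (G : CausalNet) (Vs : Set G.V) (Es : Set G.E)
    (hs : ∀ e ∈ Es, G.src e ∈ Vs) (ht : ∀ e ∈ Es, G.tgt e ∈ Vs) : CausalNet where
  V := Vs
  E := Es
  src e := ⟨G.src e.1, hs e.1 e.2⟩
  tgt e := ⟨G.tgt e.1, ht e.1 e.2⟩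
  fintypeV := Fintype.ofFinite _
  fintypeE := Fintype.ofFinite _
  acyclic := noCycleData_of_map _ _ G Subtype.val Subtype.val (fun _ => rfl) (fun _ => rfl)

/-- The fiber of a morphism at a vertex `v` of the codomain: the sub-causal-net
of the domain on the vertices mapped to `v` and the edges mapped to the identity
path at `v`. -/
noncomputable def fiber (φ : G ⟶ H) (v : H.V) : CausalNet :=
  mkSub G {w : G.V | vmap φ w = v}
    {e : G.E | IsContractionEdge φ e ∧ vmap φ (G.src e) = v}
    (fun _ he => he.2)
    (fun e he =>
      show vmap φ (G.tgt e) = v from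
        Quiver.Path.eq_of_length_zero (edgePath φ e) he.1 ▸ he.2)

/-- The underlying undirected (simple) graph of a causal-net. -/
def undirected (G : CausalNet) : SimpleGraph G.V where
  Adj v w := v ≠ w ∧ ∃ e : G.E, (G.src e = v ∧ G.tgt e = w) ∨ (G.src e = w ∧ G.tgt e = v)
  symm := by
    refine ⟨?_⟩
    rintro v w ⟨hne, e, he⟩
    exact ⟨hne.symm, e, he.symm⟩
  loopless := by
    refine ⟨?_⟩
    intro v h
    exact h.1 rfl

/-- A causal-net is connected if its underlying undirected graph is connected. -/
def Connected (G : CausalNet) : Prop := (undirected G).Connected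

/-- A causal-Tree: a causal-net whose simplification has a tree as underlying
undirected graph.  (Since a causal-net is acyclic, the underlying undirected
graph of its simplification is exactly `undirected G`.) -/
def IsCausalTree (G : CausalNet) : Prop := (undirected G).IsTree

/-- A contraction: a vertex-coarse-graining all of whose fibers are connected. -/
def IsContractionMor (φ : G ⟶ H) : Prop :=
  IsVertexCoarseGraining φ ∧ ∀ v : H.V, Connected (fiber φ v)

/-- A simple contraction: a contraction with exactly one non-trivial fiber, that
fiber consisting of two vertices together with all edges from the first to the
second. -/
def IsSimpleContraction (φ : G ⟶ H) : Prop :=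
  IsContractionMor φ ∧
  ∃ w₁ w₂ : G.V, w₁ ≠ w₂ ∧ vmap φ w₁ = vmap φ w₂ ∧
    (∃ e : G.E, G.src e = w₁ ∧ G.tgt e = w₂) ∧
    (∀ e : G.E, IsContractionEdge φ e ↔ (G.src e = w₁ ∧ G.tgt e = w₂)) ∧
    (∀ u u' : G.V, vmap φ u = vmap φ u' →
      u = u' ∨ ((u = w₁ ∨ u = w₂) ∧ (u' = w₁ ∨ u' = w₂)))

/-- A tree-contraction: a contraction all of whose fibers are causal-Trees. -/
def IsTreeContraction (φ : G ⟶ H) : Prop :=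
  IsContractionMor φ ∧ ∀ v : H.V, IsCausalTree (fiber φ v)

/-- A directed multi-path: a causal-net whose simplification is a directed path. -/
def IsDirectedMultiPath (K : CausalNet) : Prop :=
  ∃ (a b : K.V) (p : Quiver.Path a b),
    (pathVertices p).Nodup ∧ (∀ v : K.V, v ∈ pathVertices p) ∧
    ∀ e : K.E, ∃ h ∈ pathEdges p, K.src e = K.src h ∧ K.tgt e = K.tgt h

/-- A path-contraction: a vertex-coarse-graining all of whose fibers are
directed multi-paths. -/
def IsPathContraction (φ : G ⟶ H) : Prop :=
  IsVertexCoarseGraining φ ∧ ∀ v : H.V, IsDirectedMultiPath (fiber φ v)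

/-- A point: a causal-net with exactly one vertex and no edges. -/
def IsPoint (A : CausalNet) : Prop := (∃ v : A.V, ∀ w : A.V, w = v) ∧ IsEmpty A.E

/-- Reachability: there is a directed path from `a` to `b`. -/
def Reaches (G : CausalNet) (a b : G.V) : Prop := Nonempty (Quiver.Path a b)

/-- A coclique: a set of vertices no two distinct members of which are
comparable under the reachability order. -/
def IsCoclique (G : CausalNet) (S : Set G.V) : Prop :=
  ∀ a ∈ S, ∀ b ∈ S, a ≠ b → ¬ Reaches G a b

/-- A multi-edge: the nonempty set of all edges from one fixed vertex to another. -/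
def IsMultiEdge (G : CausalNet) (s : Set G.E) : Prop :=
  s.Nonempty ∧ ∃ a b : G.V, s = {e : G.E | G.src e = a ∧ G.tgt e = b}

/-- The pair of vertices whose multi-edge is contracted by a simple contraction. -/
def ContractedPair (φ : G ⟶ H) (w₁ w₂ : G.V) : Prop :=
  w₁ ≠ w₂ ∧ vmap φ w₁ = vmap φ w₂ ∧ (∃ e : G.E, G.src e = w₁ ∧ G.tgt e = w₂) ∧
  ∀ e : G.E, IsContractionEdge φ e ↔ (G.src e = w₁ ∧ G.tgt e = w₂)

/-- Two causal-nets are isomorphic in `Cau`. -/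
def IsIsomorphicTo (A B : CausalNet) : Prop := ∃ φ : A ⟶ B, IsIso φ

/-- A simple causal-net: at most one edge between any ordered pair of vertices. -/
def IsSimpleNet (G : CausalNet) : Prop :=
  ∀ e₁ e₂ : G.E, G.src e₁ = G.src e₂ → G.tgt e₁ = G.tgt e₂ → e₁ = e₂

/-- A harmonic causal-net: every fusion out of it is an isomorphism. -/
def Harmonic (G : CausalNet) : Prop :=
  ∀ (H : CausalNet) (φ : G ⟶ H), IsFusion φ → IsIso φ

/-- A hamiltonian path: a directed path visiting every vertex exactly once. -/
def HasHamiltonianPath (G : CausalNet) : Prop :=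
  ∃ (a b : G.V) (p : Quiver.Path a b),
    (pathVertices p).Nodup ∧ ∀ v : G.V, v ∈ pathVertices p

/-- Morphisms which can be written as a composition of finitely many morphisms
each satisfying `P`. -/
inductive IsCompOf (P : ∀ ⦃A B : CausalNet⦄, (A ⟶ B) → Prop) :
    ∀ {A B : CausalNet}, (A ⟶ B) → Prop
  | of {A B : CausalNet} (φ : A ⟶ B) : P φ → IsCompOf P φ
  | comp {A B C : CausalNet} (φ : A ⟶ B) (ψ : B ⟶ C) :
      IsCompOf P φ → IsCompOf P ψ → IsCompOf P (φ ≫ ψ)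

def SimpleContractionStep (A B : CausalNet) : Prop := ∃ φ : A ⟶ B, IsSimpleContraction φ

theorem length_eq_zero_of_loop {v : G.V} (p : Quiver.Path v v) : p.length = 0 :=
  G.acyclic v p

theorem reaches_refl (a : G.V) : Reaches G a a := ⟨.nil⟩

theorem Reaches.trans {a b c : G.V} (hab : Reaches G a b) (hbc : Reaches G b c) :
    Reaches G a c :=
  let ⟨p⟩ := hab; let ⟨q⟩ := hbc; ⟨p.comp q⟩

theorem reaches_src_tgt (e : G.E) : Reaches G (G.src e) (G.tgt e) :=
  ⟨(edgeHom G e).toPath⟩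

theorem not_reaches_of_length_ne_zero {a b : G.V} (p : Quiver.Path a b) (hp : p.length ≠ 0) :
    ¬ Reaches G b a := by
  rintro ⟨q⟩
  have := length_eq_zero_of_loop (p.comp q)
  rw [Quiver.Path.length_comp] at this
  omega

theorem src_ne_tgt (e : G.E) : G.src e ≠ G.tgt e := fun h =>
  not_reaches_of_length_ne_zero (edgeHom G e).toPath one_ne_zero (h ▸ reaches_refl _)

theorem exists_edge_of_two_le_length {a b : G.V} (p : Quiver.Path a b) (hp : 2 ≤ p.length) :
    ∃ e : G.E, G.tgt e = b ∧ ∃ q : Quiver.Path a (G.src e), q.length ≠ 0 := by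
  cases p with
  | nil => simp at hp
  | cons q f =>
    obtain ⟨e, rfl, rfl⟩ := f
    exact ⟨e, rfl, q, by simp at hp; omega⟩

theorem length_eq_length_pathEdges {a b : G.V} (p : Quiver.Path a b) :
    p.length = (pathEdges p).length := by
  induction p with
  | nil => simp [pathEdges]
  | cons q f ih => simp [pathEdges, ih]

theorem src_tgt_of_pathEdges_eq_singleton {a b : G.V} {p : Quiver.Path a b} {h : G.E}
    (hp : pathEdges p = [h]) : G.src h = a ∧ G.tgt h = b := by
  cases p with
  | nil => simp [pathEdges] at hp
  | cons q f =>
    obtain ⟨h', rfl, rfl⟩ := f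
    have hq : pathEdges q = [] := by
      simpa [pathEdges] using congrArg List.length hp
    obtain rfl := Quiver.Path.eq_of_length_zero q (by rw [length_eq_length_pathEdges, hq]; rfl)
    simp only [pathEdges, hq, homEdge, List.nil_append, List.cons.injEq, and_true] at hp
    exact hp ▸ ⟨rfl, rfl⟩

theorem MapsToEdge.src_tgt {φ : G ⟶ H} {e : G.E} {h : H.E} (he : MapsToEdge φ e h) :
    H.src h = vmap φ (G.src e) ∧ H.tgt h = vmap φ (G.tgt e) :=
  src_tgt_of_pathEdges_eq_singleton he

theorem undirected_adj_src_tgt (e : G.E) : (undirected G).Adj (G.src e) (G.tgt e) :=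
  ⟨src_ne_tgt e, e, .inl ⟨rfl, rfl⟩⟩

theorem reachable_of_path {a b : G.V} (p : Quiver.Path a b) : (undirected G).Reachable a b := by
  induction p with
  | nil => rfl
  | cons _ f ih =>
    obtain ⟨e, rfl, rfl⟩ := f
    exact ih.trans (undirected_adj_src_tgt e).reachable

theorem IsPoint.connected (hG : IsPoint G) : Connected G := by
  obtain ⟨⟨v, hv⟩, -⟩ := hG
  exact (undirected G).connected_iff_exists_forall_reachable.2 ⟨v, fun w => hv w ▸ .refl _⟩

theorem isPoint_of_subsingleton [Subsingleton G.V] (v : G.V) : IsPoint G :=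
  ⟨⟨v, fun w => Subsingleton.elim w v⟩, ⟨fun e => src_ne_tgt e (Subsingleton.elim _ _)⟩⟩

theorem Connected.nonempty_edge_of_nontrivial [Nontrivial G.V] (hG : Connected G) :
    Nonempty G.E := by
  obtain ⟨u, v, huv⟩ := exists_pair_ne G.V
  obtain ⟨w⟩ := hG.preconnected u v
  cases w with
  | nil => exact absurd rfl huv
  | cons h _ => exact ⟨h.2.choose⟩

theorem reachable_vmap (φ : G ⟶ H) {u v : G.V} (h : (undirected G).Reachable u v) :
    (undirected H).Reachable (vmap φ u) (vmap φ v) := by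
  obtain ⟨w⟩ := h
  induction w with
  | nil => rfl
  | cons hadj _ ih =>
    obtain ⟨-, e, ⟨rfl, rfl⟩ | ⟨rfl, rfl⟩⟩ := hadj
    · exact (reachable_of_path (edgePath φ e)).trans ih
    · exact (reachable_of_path (edgePath φ e)).symm.trans ih

theorem Connected.of_surjective_vmap (φ : G ⟶ H) (hφ : Function.Surjective (vmap φ))
    (hG : Connected G) : Connected H := by
  refine (SimpleGraph.connected_iff _).2 ⟨fun x y => ?_, hG.nonempty.map (vmap φ)⟩
  obtain ⟨u, rfl⟩ := hφ x
  obtain ⟨v, rfl⟩ := hφ y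
  exact reachable_vmap φ (hG.preconnected u v)

/-- The inclusion of a sub-causal-net, as a map of underlying graphs. -/
def mkSubHom (G : CausalNet) (Vs : Set G.V) (Es : Set G.E)
    (hs : ∀ e ∈ Es, G.src e ∈ Vs) (ht : ∀ e ∈ Es, G.tgt e ∈ Vs) :
    undirected (mkSub G Vs Es hs ht) →g undirected G where
  toFun := Subtype.val
  map_rel' := by
    rintro x y ⟨hxy, e, he⟩
    refine ⟨fun h => hxy (Subtype.ext h), e.1, ?_⟩
    rcases he with ⟨rfl, rfl⟩ | ⟨rfl, rfl⟩
    exacts [.inl ⟨rfl, rfl⟩, .inr ⟨rfl, rfl⟩]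

theorem reachable_of_vmap_eq {φ : G ⟶ H} (hφ : ∀ v, Connected (fiber φ v)) {u u' : G.V}
    (h : vmap φ u = vmap φ u') : (undirected G).Reachable u u' :=
  ((hφ (vmap φ u)).preconnected ⟨u, rfl⟩ ⟨u', h.symm⟩).map (mkSubHom ..)

theorem exists_adj_lift {φ : G ⟶ H} (hφ : IsQuotientMor φ) {x y : H.V}
    (hxy : (undirected H).Adj x y) :
    ∃ a b : G.V, vmap φ a = x ∧ vmap φ b = y ∧ (undirected G).Adj a b := by
  obtain ⟨-, h, hxy⟩ := hxy
  obtain ⟨e, he⟩ := hφ.2 h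
  obtain ⟨hs, ht⟩ := he.src_tgt
  rcases hxy with ⟨rfl, rfl⟩ | ⟨rfl, rfl⟩
  · exact ⟨_, _, hs.symm, ht.symm, undirected_adj_src_tgt e⟩
  · exact ⟨_, _, ht.symm, hs.symm, (undirected_adj_src_tgt e).symm⟩

theorem Connected.of_isQuotientMor {φ : G ⟶ H} (hφ : IsQuotientMor φ)
    (hfib : ∀ v, Connected (fiber φ v)) (hH : Connected H) : Connected G := by
  suffices key : ∀ {x y : H.V}, (undirected H).Walk x y → ∀ u v : G.V,
      vmap φ u = x → vmap φ v = y → (undirected G).Reachable u v by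
    obtain ⟨x⟩ := hH.nonempty
    obtain ⟨u, -⟩ := hφ.1 x
    refine (SimpleGraph.connected_iff _).2 ⟨fun u v => ?_, ⟨u⟩⟩
    exact key (hH.preconnected _ _).some u v rfl rfl
  intro x y w
  induction w with
  | nil => exact fun u v hu hv => reachable_of_vmap_eq hfib (hu.trans hv.symm)
  | cons hadj _ ih =>
    intro u v hu hv
    obtain ⟨a, b, ha, hb, hab⟩ := exists_adj_lift hφ hadj
    exact (reachable_of_vmap_eq hfib (hu.trans ha.symm)).trans (hab.reachable.trans (ih b v hb hv))

theorem IsContractionMor.connected_iff {φ : G ⟶ H} (hφ : IsContractionMor φ) :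
    Connected G ↔ Connected H :=
  ⟨Connected.of_surjective_vmap φ hφ.1.1.1.1, Connected.of_isQuotientMor hφ.1.1.1 hφ.2⟩

/-- An edge of `G` with no longer directed path parallel to it. -/
def IsShortEdge (G : CausalNet) (e : G.E) : Prop :=
  ∀ p : Quiver.Path (G.src e) (G.tgt e), p.length ≤ 1

/-- An edge minimising the number of vertices between its endpoints is short: a longer parallel
path would end in an edge with strictly fewer such vertices. -/
theorem exists_isShortEdge [Nonempty G.E] : ∃ e : G.E, IsShortEdge G e := by
  classical
  let between (e : G.E) : Finset G.V :=
    Finset.univ.filter fun v => Reaches G (G.src e) v ∧ Reaches G v (G.tgt e)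
  obtain ⟨e, -, hmin⟩ := Finset.exists_min_image Finset.univ (fun e => (between e).card)
    Finset.univ_nonempty
  refine ⟨e, fun p => not_lt.1 fun hp => ?_⟩
  obtain ⟨f, hf, q, hq⟩ := exists_edge_of_two_le_length p hp
  have hsub : between f ⊂ between e := by
    refine Finset.ssubset_iff_of_subset (fun v hv => ?_) |>.2 ⟨G.src e, ?_, fun hv => ?_⟩
    · simp only [between, Finset.mem_filter, Finset.mem_univ, true_and] at hv ⊢
      exact ⟨Reaches.trans ⟨q⟩ hv.1, hf ▸ hv.2⟩
    · simpa [between] using ⟨reaches_refl _, ⟨p⟩⟩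
    · simp only [between, Finset.mem_filter, Finset.mem_univ, true_and] at hv
      exact not_reaches_of_length_ne_zero q hq hv.1
  exact (Finset.card_lt_card hsub).not_ge (hmin f (Finset.mem_univ _))

section Contraction

variable (e₀ : G.E)

def IsParallel (e : G.E) : Prop := G.src e = G.src e₀ ∧ G.tgt e = G.tgt e₀

open Classical in
/-- The vertex map of the contraction of `e₀`: its target is sent to its source. -/
noncomputable def contractVertex (v : G.V) : {v : G.V // v ≠ G.tgt e₀} :=
  if h : v = G.tgt e₀ then ⟨G.src e₀, src_ne_tgt e₀⟩ else ⟨v, h⟩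

theorem contractVertex_of_ne {v : G.V} (h : v ≠ G.tgt e₀) : contractVertex e₀ v = ⟨v, h⟩ :=
  dif_neg h

theorem contractVertex_val (v : {v : G.V // v ≠ G.tgt e₀}) : contractVertex e₀ v.1 = v :=
  contractVertex_of_ne e₀ v.2

theorem contractVertex_tgt : contractVertex e₀ (G.tgt e₀) = ⟨G.src e₀, src_ne_tgt e₀⟩ := by
  unfold contractVertex
  exact dif_pos rfl

theorem contractVertex_src_eq_tgt : contractVertex e₀ (G.src e₀) = contractVertex e₀ (G.tgt e₀) :=
  (contractVertex_of_ne e₀ (src_ne_tgt e₀)).trans (contractVertex_tgt e₀).symm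

theorem val_contractVertex_eq_or (v : G.V) :
    (contractVertex e₀ v).1 = v ∨ v = G.tgt e₀ ∧ (contractVertex e₀ v).1 = G.src e₀ := by
  by_cases h : v = G.tgt e₀
  · exact .inr ⟨h, by rw [h, contractVertex_tgt]⟩
  · exact .inl (by rw [contractVertex_of_ne e₀ h])

theorem eq_or_of_contractVertex_eq {u u' : G.V} (h : contractVertex e₀ u = contractVertex e₀ u') :
    u = u' ∨ (u = G.src e₀ ∨ u = G.tgt e₀) ∧ (u' = G.src e₀ ∨ u' = G.tgt e₀) := by
  have h := congrArg Subtype.val h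
  rcases val_contractVertex_eq_or e₀ u with hu | ⟨rfl, hu⟩ <;>
    rcases val_contractVertex_eq_or e₀ u' with hu' | ⟨rfl, hu'⟩
  · exact .inl (hu.symm.trans (h.trans hu'))
  · exact .inr ⟨.inl (hu.symm.trans (h.trans hu')), .inr rfl⟩
  · exact .inr ⟨.inr rfl, .inl (hu'.symm.trans (h.symm.trans hu))⟩
  · exact .inl rfl

/-- Reachability in `G` once the endpoints of `e₀` are identified. -/
def MergedReaches (x y : G.V) : Prop :=
  Reaches G x y ∨ Reaches G x (G.tgt e₀) ∧ Reaches G (G.src e₀) y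

theorem mergedReaches_contractVertex_left (x y : G.V) :
    MergedReaches e₀ (contractVertex e₀ x).1 y ↔ MergedReaches e₀ x y := by
  rcases val_contractVertex_eq_or e₀ x with h | ⟨rfl, h⟩
  · rw [h]
  · rw [h]
    constructor
    · rintro (h | ⟨-, h⟩) <;> exact .inr ⟨reaches_refl _, h⟩
    · rintro (h | ⟨-, h⟩)
      exacts [.inl ((reaches_src_tgt e₀).trans h), .inl h]

theorem mergedReaches_contractVertex_right (x y : G.V) :
    MergedReaches e₀ x (contractVertex e₀ y).1 ↔ MergedReaches e₀ x y := by
  rcases val_contractVertex_eq_or e₀ y with h | ⟨rfl, h⟩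
  · rw [h]
  · rw [h]
    constructor
    · rintro (h | ⟨h, -⟩)
      exacts [.inl (h.trans (reaches_src_tgt e₀)), .inl h]
    · rintro (h | ⟨h, -⟩) <;> exact .inr ⟨h, reaches_refl _⟩

/-- A short edge `e₀` is the only way to get back from a target to a source once its
endpoints are identified. -/
theorem not_mergedReaches_tgt_src (he₀ : IsShortEdge G e₀) {e : G.E}
    (he : ¬ IsParallel e₀ e) : ¬ MergedReaches e₀ (G.tgt e) (G.src e) := by
  rintro (h | ⟨⟨q₁⟩, ⟨q₂⟩⟩)
  · exact not_reaches_of_length_ne_zero (edgeHom G e).toPath one_ne_zero h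
  · have hlen := he₀ ((q₂.comp (edgeHom G e).toPath).comp q₁)
    simp only [Quiver.Path.length_comp, Quiver.Path.length_toPath] at hlen
    exact he ⟨(Quiver.Path.eq_of_length_zero q₂ (by omega)).symm,
      Quiver.Path.eq_of_length_zero q₁ (by omega)⟩

abbrev mergedPreorder : Preorder {v : G.V // v ≠ G.tgt e₀} where
  le x y := MergedReaches e₀ x y
  le_refl x := .inl (reaches_refl _)
  le_trans x y z := by
    rintro (hxy | ⟨hx, hy⟩) (hyz | ⟨hy', hz⟩)
    · exact .inl (hxy.trans hyz)
    · exact .inr ⟨hxy.trans hy', hz⟩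
    · exact .inr ⟨hx, hy.trans hyz⟩
    · exact .inr ⟨hx, hz⟩

theorem contractVertex_lt (he₀ : IsShortEdge G e₀) {e : G.E} (he : ¬ IsParallel e₀ e) :
    letI := mergedPreorder e₀
    contractVertex e₀ (G.src e) < contractVertex e₀ (G.tgt e) := by
  letI := mergedPreorder e₀
  refine lt_iff_le_not_ge.2 ⟨?_, ?_⟩
  · show MergedReaches e₀ _ _
    rw [mergedReaches_contractVertex_left, mergedReaches_contractVertex_right]
    exact .inl (reaches_src_tgt e)
  · show ¬ MergedReaches e₀ _ _
    rw [mergedReaches_contractVertex_left, mergedReaches_contractVertex_right]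
    exact not_mergedReaches_tgt_src e₀ he₀ he

variable (he₀ : IsShortEdge G e₀)

/-- The causal-net obtained from `G` by contracting the multi-edge of a short edge `e₀`. -/
noncomputable def contractNet : CausalNet where
  V := {v : G.V // v ≠ G.tgt e₀}
  E := {e : G.E // ¬ IsParallel e₀ e}
  src e := contractVertex e₀ (G.src e.1)
  tgt e := contractVertex e₀ (G.tgt e.1)
  fintypeV := Fintype.ofFinite _
  fintypeE := Fintype.ofFinite _
  acyclic := @noCycleData_of_lt _ _ (mergedPreorder e₀) _ _ fun e => contractVertex_lt e₀ he₀ e.2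

theorem pathEdges_cast_nil {a b : G.V} (h : a = b) :
    pathEdges ((Quiver.Path.nil : Quiver.Path a a).cast rfl h) = [] := by
  subst h
  simp [Quiver.Path.cast_rfl_rfl, pathEdges]

open Classical in
noncomputable def contractPrefunctor : G.V ⥤q Paths (contractNet e₀ he₀).V where
  obj := contractVertex e₀
  map {x y} f :=
    if h : IsParallel e₀ f.1 then
      Quiver.Path.nil.cast rfl <| by
        obtain ⟨e, rfl, rfl⟩ := f
        exact (congrArg (contractVertex e₀) h.1).trans
          ((contractVertex_src_eq_tgt e₀).trans (congrArg (contractVertex e₀) h.2.symm))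
    else
      Quiver.Hom.toPath (V := (contractNet e₀ he₀).V)
        ⟨⟨f.1, h⟩, congrArg (contractVertex e₀) f.2.1, congrArg (contractVertex e₀) f.2.2⟩

/-- The simple contraction of the multi-edge of `e₀`. -/
noncomputable def contractMor : G ⟶ contractNet e₀ he₀ :=
  Paths.lift (contractPrefunctor e₀ he₀)

theorem vmap_contractMor (v : G.V) : vmap (contractMor e₀ he₀) v = contractVertex e₀ v := rfl

theorem edgePath_contractMor (e : G.E) :
    edgePath (contractMor e₀ he₀) e = (contractPrefunctor e₀ he₀).map (edgeHom G e) :=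
  Paths.lift_toPath _ _

theorem pathEdges_edgePath_contractMor_of_isParallel {e : G.E} (h : IsParallel e₀ e) :
    pathEdges (edgePath (contractMor e₀ he₀) e) = [] := by
  rw [edgePath_contractMor]
  simp only [contractPrefunctor, edgeHom, dif_pos h]
  exact pathEdges_cast_nil _

theorem pathEdges_edgePath_contractMor_of_not_isParallel {e : G.E} (h : ¬ IsParallel e₀ e) :
    pathEdges (edgePath (contractMor e₀ he₀) e) = [⟨e, h⟩] := by
  rw [edgePath_contractMor]
  simp only [contractPrefunctor, edgeHom, dif_neg h]
  erw [pathEdges, pathEdges]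
  rfl

theorem isContractionEdge_contractMor_iff (e : G.E) :
    IsContractionEdge (contractMor e₀ he₀) e ↔ IsParallel e₀ e := by
  rw [IsContractionEdge, length_eq_length_pathEdges]
  by_cases h : IsParallel e₀ e
  · simp [pathEdges_edgePath_contractMor_of_isParallel e₀ he₀ h, h]
  · simp [pathEdges_edgePath_contractMor_of_not_isParallel e₀ he₀ h, h]

theorem mapsToEdge_contractMor_iff {e : G.E} {h : (contractNet e₀ he₀).E} :
    MapsToEdge (contractMor e₀ he₀) e h ↔ h.1 = e := by
  rw [MapsToEdge]
  by_cases hpar : IsParallel e₀ e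
  · simp only [pathEdges_edgePath_contractMor_of_isParallel e₀ he₀ hpar, List.nil_eq,
      reduceCtorEq, false_iff]
    exact fun he => h.2 (he ▸ hpar)
  · rw [pathEdges_edgePath_contractMor_of_not_isParallel e₀ he₀ hpar]
    exact List.singleton_inj.trans ⟨fun he => he ▸ rfl, fun he => Subtype.ext he.symm⟩

theorem isVertexCoarseGraining_contractMor : IsVertexCoarseGraining (contractMor e₀ he₀) := by
  refine ⟨⟨⟨fun v => ⟨v.1, contractVertex_val e₀ v⟩,
    fun h => ⟨h.1, (mapsToEdge_contractMor_iff e₀ he₀).2 rfl⟩⟩, fun e he => ?_⟩,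
    fun h e₁ e₂ h₁ h₂ => ((mapsToEdge_contractMor_iff e₀ he₀).1 h₁).symm.trans
      ((mapsToEdge_contractMor_iff e₀ he₀).1 h₂)⟩
  rw [IsSubdivisionEdge, length_eq_length_pathEdges] at he
  by_cases h : IsParallel e₀ e
  · simp [pathEdges_edgePath_contractMor_of_isParallel e₀ he₀ h] at he
  · rw [pathEdges_edgePath_contractMor_of_not_isParallel e₀ he₀ h] at he
    exact absurd (he.trans_eq List.length_singleton) (by norm_num)

theorem connected_fiber_contractMor (v : {v : G.V // v ≠ G.tgt e₀}) :
    Connected (fiber (contractMor e₀ he₀) v) := by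
  refine (SimpleGraph.connected_iff_exists_forall_reachable _).2
    ⟨⟨v.1, contractVertex_val e₀ v⟩, fun x => ?_⟩
  have hx : contractVertex e₀ x.1 = v := x.2
  rcases val_contractVertex_eq_or e₀ x.1 with h | ⟨hxt, hvs⟩
  · have hxv : x = ⟨v.1, contractVertex_val e₀ v⟩ :=
      Subtype.ext (h.symm.trans (congrArg Subtype.val hx))
    exact hxv ▸ .refl _
  · rw [hx] at hvs
    have he₀v : vmap (contractMor e₀ he₀) (G.src e₀) = v := by
      rw [vmap_contractMor, ← hvs, contractVertex_val]
    refine SimpleGraph.Adj.reachable ⟨fun h =>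
      src_ne_tgt e₀ (hvs.symm.trans ((congrArg Subtype.val h).trans hxt)),
      ⟨e₀, (isContractionEdge_contractMor_iff e₀ he₀ e₀).2 ⟨rfl, rfl⟩, he₀v⟩,
      .inl ⟨Subtype.ext hvs.symm, Subtype.ext hxt.symm⟩⟩

theorem isSimpleContraction_contractMor : IsSimpleContraction (contractMor e₀ he₀) :=
  ⟨⟨isVertexCoarseGraining_contractMor e₀ he₀, connected_fiber_contractMor e₀ he₀⟩,
    G.src e₀, G.tgt e₀, src_ne_tgt e₀, contractVertex_src_eq_tgt e₀, ⟨e₀, rfl, rfl⟩,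
    isContractionEdge_contractMor_iff e₀ he₀, fun _ _ => eq_or_of_contractVertex_eq e₀⟩

theorem card_contractNet_lt : Fintype.card (contractNet e₀ he₀).V < Fintype.card G.V :=
  @Fintype.card_subtype_lt _ _ _ (contractNet e₀ he₀).fintypeV _ (not_not.2 rfl)

end Contraction

theorem Connected.exists_simpleContractions_to_point {G : CausalNet} (hG : Connected G) :
    ∃ P : CausalNet, IsPoint P ∧ Relation.ReflTransGen SimpleContractionStep G P := by
  obtain ⟨v⟩ := hG.nonempty
  by_cases hG₁ : Subsingleton G.V
  · exact ⟨G, isPoint_of_subsingleton v, .refl⟩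
  rw [not_subsingleton_iff_nontrivial] at hG₁
  have := hG.nonempty_edge_of_nontrivial
  obtain ⟨e, he⟩ := exists_isShortEdge (G := G)
  have hcontr := isSimpleContraction_contractMor e he
  obtain ⟨P, hP, hGP⟩ := ((hcontr.1.connected_iff).1 hG).exists_simpleContractions_to_point
  exact ⟨P, hP, .head ⟨_, hcontr⟩ hGP⟩
termination_by Fintype.card G.V
decreasing_by exact card_contractNet_lt e he

theorem connected_iff_contractible_to_point (G : CausalNet) :
    Connected G ↔
      ∃ H : CausalNet, IsPoint H ∧ Relation.ReflTransGen SimpleContractionStep G H := by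
  refine ⟨Connected.exists_simpleContractions_to_point, ?_⟩
  rintro ⟨H, hH, hGH⟩
  induction hGH using Relation.ReflTransGen.head_induction_on with
  | refl => exact hH.connected
  | head hstep _ ih =>
    obtain ⟨φ, hφ⟩ := hstep
    exact hφ.1.connected_iff.2 ih

end CausalNets
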